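/- arXiv:1508.04577 — 4 statements merged into one kernel-verified Lean document; each statement's English description precedes it below -/
import Mathlib

section
/- Let d > 0, ω ∈ ℝ with d·ω ≤ 1, and κ > 0. If ψ : [0,d] → ℂ is twice differentiable, satisfies ψ″(x) = κ²·ψ(x) for all x ∈ [0,d], and satisfies the boundary conditions ψ′(0) = ψ′(d) = ω·(ψ(d) − ψ(0)), then ψ is identically zero on [0,d]. (The one-dimensional Schrödinger operator with a point δ′-interaction of strength ω on a loop of length d has no negative eigenvalues when d·ω ≤ 1.) -/
/-!
The combinations `ψ' + κψ` and `ψ' - κψ` solve first-order equations, so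
`ψ' + κψ = p e^{κx}` and `ψ' - κψ = q e^{-κx}` with `p, q` their values at `0`.
The boundary conditions become a linear system for `(p, q)`: equality of `ψ'` at both ends
forces `q = e^{κd} p`, after which the jump condition reads
`(κ (e^{κd} + 1) - 2ω (e^{κd} - 1)) p = 0`. The coefficient is positive because
`tanh (κd/2) < κd/2` and `dω ≤ 1`, so `p = q = 0` and hence `2κψ = 0`.
-/

open Set

lemma two_mul_exp_sub_one_lt {t : ℝ} (ht : 0 < t) :
    2 * (Real.exp t - 1) < t * (Real.exp t + 1) := by
  let g : ℝ → ℝ := fun s ↦ s * (Real.exp s + 1) - 2 * (Real.exp s - 1)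
  have hderiv (s : ℝ) : HasDerivAt g (1 - Real.exp s + s * Real.exp s) s := by
    refine (((hasDerivAt_id s).mul ((Real.hasDerivAt_exp s).add_const 1)).sub
      (((Real.hasDerivAt_exp s).sub_const 1).const_mul 2)).congr_deriv ?_
    simp only [id_eq]; ring
  have hmono : StrictMonoOn g (Ici 0) := by
    refine strictMonoOn_of_deriv_pos (convex_Ici 0)
      (fun s _ ↦ (hderiv s).continuousAt.continuousWithinAt) fun s hs ↦ ?_
    rw [interior_Ici, mem_Ioi] at hs
    have hexp_neg : 1 - s < (Real.exp s)⁻¹ := by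
      simpa [Real.exp_neg, add_comm, sub_eq_add_neg] using
        Real.add_one_lt_exp (neg_ne_zero.2 hs.ne')
    rw [(hderiv s).deriv]
    have hexp := Real.exp_pos s
    nlinarith [mul_lt_mul_of_pos_left hexp_neg hexp, mul_inv_cancel₀ hexp.ne']
  have := hmono self_mem_Ici ht.le ht
  simp only [g, Real.exp_zero] at this
  linarith

lemma constant_of_hasDerivWithinAt_Icc_zero {E : Type*} [NormedAddCommGroup E]
    [NormedSpace ℝ E] {f : ℝ → E} {a b : ℝ}
    (hf : ∀ x ∈ Icc a b, HasDerivWithinAt f 0 (Icc a b) x) : ∀ x ∈ Icc a b, f x = f a :=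
  constant_of_has_deriv_right_zero (fun x hx ↦ (hf x hx).continuousWithinAt) fun x hx ↦
    (hf x (Ico_subset_Icc_self hx)).mono_of_mem_nhdsWithin (Icc_mem_nhdsGE_of_mem hx)

lemma add_mul_eq_exp_mul_of_hasDerivWithinAt {a b : ℝ} {c : ℂ} {ψ ψ' ψ'' : ℝ → ℂ}
    (hder1 : ∀ x ∈ Icc a b, HasDerivWithinAt ψ (ψ' x) (Icc a b) x)
    (hder2 : ∀ x ∈ Icc a b, HasDerivWithinAt ψ' (ψ'' x) (Icc a b) x)
    (hode : ∀ x ∈ Icc a b, ψ'' x = c ^ 2 * ψ x) :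
    ∀ x ∈ Icc a b, ψ' x + c * ψ x = Complex.exp (c * (x - a)) * (ψ' a + c * ψ a) := by
  -- `e^{-cx} (ψ' + cψ)` has derivative `e^{-cx} (ψ'' - c²ψ) = 0`.
  have hconst : ∀ x ∈ Icc a b, Complex.exp (-c * x) * (ψ' x + c * ψ x) =
      Complex.exp (-c * a) * (ψ' a + c * ψ a) := by
    refine constant_of_hasDerivWithinAt_Icc_zero fun x hx ↦ ?_
    have hexp :
        HasDerivAt (fun y : ℝ ↦ Complex.exp (-c * y)) (-c * Complex.exp (-c * x)) x := by
      simpa [mul_comm] using ((hasDerivAt_id (x : ℂ)).const_mul (-c)).cexp.comp_ofReal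
    refine (hexp.hasDerivWithinAt.mul
      ((hder2 x hx).add ((hder1 x hx).const_mul c))).congr_deriv ?_
    rw [Pi.add_apply, hode x hx]; ring
  intro x hx
  calc ψ' x + c * ψ x = Complex.exp (c * x) * (Complex.exp (-c * x) * (ψ' x + c * ψ x)) := by
        rw [← mul_assoc, ← Complex.exp_add, neg_mul, add_neg_cancel, Complex.exp_zero, one_mul]
    _ = Complex.exp (c * (x - a)) * (ψ' a + c * ψ a) := by
        rw [hconst x hx, ← mul_assoc, ← Complex.exp_add]; ring_nf

lemma eq_zero_of_boundary_system {κ ω u v : ℝ} {p q : ℂ} (hu : 1 < u) (huv : u * v = 1)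
    (hdet : 2 * ω * (u - 1) < κ * (u + 1))
    (hperiodic : (u : ℂ) * p + v * q = p + q)
    (hjump : (κ : ℂ) * (p + q) = ω * (u * p - v * q - p + q)) : p = 0 ∧ q = 0 := by
  have hu1 : (u : ℂ) - 1 ≠ 0 := by exact_mod_cast (sub_pos.2 hu).ne'
  have huv' : (u : ℂ) * v = 1 := by exact_mod_cast huv
  have hq : q = u * p := by
    have h : ((u : ℂ) - 1) * (u * p - q) = 0 := by
      linear_combination u * hperiodic - q * huv'
    linear_combination -(mul_eq_zero.1 h).resolve_left hu1
  have hp : p = 0 := by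
    have h : ((κ * (u + 1) - 2 * ω * (u - 1) : ℝ) : ℂ) * p = 0 := by
      push_cast
      linear_combination hjump - (κ + ω * v - ω) * hq - ω * p * huv'
    exact (mul_eq_zero.1 h).resolve_left (by exact_mod_cast (sub_pos.2 hdet).ne')
  exact ⟨hp, by rw [hq, hp, mul_zero]⟩

lemma two_mul_mul_exp_sub_one_lt {d ω κ : ℝ} (hd : 0 < d) (hω : d * ω ≤ 1) (hκ : 0 < κ) :
    2 * ω * (Real.exp (κ * d) - 1) < κ * (Real.exp (κ * d) + 1) := by
  have hE : 0 < Real.exp (κ * d) - 1 := sub_pos.2 (Real.one_lt_exp_iff.2 (by positivity))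
  have hexp := two_mul_exp_sub_one_lt (mul_pos hκ hd)
  have hdω : d * ω * (Real.exp (κ * d) - 1) ≤ Real.exp (κ * d) - 1 :=
    mul_le_of_le_one_left hE.le hω
  refine lt_of_mul_lt_mul_left ?_ hd.le
  nlinarith

/-- If d·ω ≤ 1 and κ > 0, any twice differentiable ψ on [0,d] solving ψ″ = κ²ψ with the
δ′-boundary conditions ψ′(0) = ψ′(d) = ω·(ψ(d) − ψ(0)) vanishes identically on [0,d]:
the point δ′-interaction on a loop of length d has no negative eigenvalues when d·ω ≤ 1. -/
theorem stmt_1 (d ω κ : ℝ) (hd : 0 < d) (hω : d * ω ≤ 1) (hκ : 0 < κ)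
    (ψ ψ' ψ'' : ℝ → ℂ)
    (hder1 : ∀ x ∈ Set.Icc (0 : ℝ) d, HasDerivWithinAt ψ (ψ' x) (Set.Icc 0 d) x)
    (hder2 : ∀ x ∈ Set.Icc (0 : ℝ) d, HasDerivWithinAt ψ' (ψ'' x) (Set.Icc 0 d) x)
    (hode : ∀ x ∈ Set.Icc (0 : ℝ) d, ψ'' x = (κ : ℂ) ^ 2 * ψ x)
    (hbc0 : ψ' 0 = (ω : ℂ) * (ψ d - ψ 0))
    (hbcd : ψ' d = (ω : ℂ) * (ψ d - ψ 0)) :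
    ∀ x ∈ Set.Icc (0 : ℝ) d, ψ x = 0 := by
  have hplus := add_mul_eq_exp_mul_of_hasDerivWithinAt hder1 hder2 hode
  have hminus := add_mul_eq_exp_mul_of_hasDerivWithinAt (c := -κ) hder1 hder2
    fun x hx ↦ by rw [hode x hx, neg_sq]
  have hd_mem : d ∈ Icc 0 d := right_mem_Icc.2 hd.le
  have hplus_d := hplus d hd_mem
  have hminus_d := hminus d hd_mem
  simp only [Complex.ofReal_zero, sub_zero, neg_mul] at hplus_d hminus_d
  obtain ⟨hp, hq⟩ := eq_zero_of_boundary_system (Real.one_lt_exp_iff.2 (mul_pos hκ hd))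
    (by rw [← Real.exp_add, add_neg_cancel, Real.exp_zero])
    (two_mul_mul_exp_sub_one_lt hd hω hκ)
    (p := ψ' 0 + κ * ψ 0) (q := ψ' 0 + -κ * ψ 0)
    (by push_cast; linear_combination -hplus_d - hminus_d + 2 * (hbcd.trans hbc0.symm))
    (by push_cast; linear_combination 2 * κ * hbc0 + ω * hplus_d - ω * hminus_d)
  intro x hx
  have hplus_x := hplus x hx
  have hminus_x := hminus x hx
  rw [hp, mul_zero] at hplus_x
  rw [hq, mul_zero] at hminus_x
  have h : (2 * κ : ℂ) * ψ x = 0 := by linear_combination hplus_x - hminus_x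
  exact (mul_eq_zero.1 h).resolve_left (by exact_mod_cast (mul_pos two_pos hκ).ne')
end

section
/- Let d > 0, ω ∈ ℝ, and κ > 0. There exists a pair (A,B) ∈ ℂ² with (A,B) ≠ (0,0) such that the function ψ(x) = A·e^{κx} + B·e^{−κx} satisfies ψ′(0) = ψ′(d) = ω·(ψ(d) − ψ(0)) if and only if (2ω/κ)·(1 − e^{−κd})/(1 + e^{−κd}) = 1. -/
/-!
The boundary condition ψ′(0) = ψ′(d) forces A = −e·B with e = e^{−κd} (because e^{κd} ≠ 1),
so up to scaling ψ = e^{κx}·(−e) + e^{−κx}. For this ψ the second condition reduces to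
κ(1 + e) = 2ω(1 − e), which is the stated equation after clearing denominators.
-/

open Complex

lemma hasDerivAt_exp_combination (A B c z : ℂ) :
    HasDerivAt (fun z : ℂ => A * exp (c * z) + B * exp (-(c * z)))
      (c * (A * exp (c * z) - B * exp (-(c * z)))) z := by
  have hexp : HasDerivAt (fun z : ℂ => exp (c * z)) (exp (c * z) * c) z :=
    ((hasDerivAt_id z).const_mul c).cexp.congr_deriv (by simp)
  have hexp_neg : HasDerivAt (fun z : ℂ => exp (-(c * z))) (exp (-(c * z)) * -c) z :=
    ((hasDerivAt_id z).const_mul c).neg.cexp.congr_deriv (by simp)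
  exact ((hexp.const_mul A).add (hexp_neg.const_mul B)).congr_deriv (by ring)

lemma deriv_ofReal_exp_combination (A B c : ℂ) (t : ℝ) :
    deriv (fun x : ℝ => A * exp (c * x) + B * exp (-(c * x))) t
      = c * (A * exp (c * t) - B * exp (-(c * t))) :=
  (hasDerivAt_exp_combination A B c t).comp_ofReal.deriv

/-- The boundary conditions for `A e^{cx} + B e^{-cx}` on `(0, d)`, with `E = e^{cd}`, `e = e^{-cd}`. -/
lemma exists_ne_zero_boundary_iff {K : Type*} [Field K] {c ω E e : K} (hc : c ≠ 0)
    (hEe : E * e = 1) (he : e ≠ 1) :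
    (∃ A B : K, (A, B) ≠ (0, 0) ∧ c * (A - B) = c * (A * E - B * e) ∧
        c * (A * E - B * e) = ω * ((A * E + B * e) - (A + B)))
      ↔ c * (1 + e) = 2 * ω * (1 - e) := by
  have hE : E ≠ 1 := fun h => he (by simpa [h] using hEe)
  constructor
  · rintro ⟨A, B, hAB, h_deriv, h_jump⟩
    have hA : A = -e * B := by
      have hprod : c * ((1 - E) * (A + e * B)) = 0 := by
        linear_combination h_deriv - B * c * hEe
      have hsum := (mul_eq_zero.1 ((mul_eq_zero.1 hprod).resolve_left hc)).resolve_left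
        (sub_ne_zero.2 hE.symm)
      linear_combination hsum
    have hB : B ≠ 0 := fun hB => hAB (by simp [hA, hB])
    subst hA
    exact mul_left_cancel₀ hB (by linear_combination -h_jump - (B * c - B * ω) * hEe)
  · intro h
    refine ⟨-e, 1, by simp, by linear_combination c * hEe, ?_⟩
    linear_combination -h + (ω - c) * hEe

lemma two_mul_div_mul_div_eq_one_iff {ω κ e : ℝ} (hκ : 0 < κ) (he : 0 < e) :
    (2 * ω / κ) * ((1 - e) / (1 + e)) = 1 ↔ 2 * ω * (1 - e) = κ * (1 + e) := by
  rw [div_mul_div_comm, div_eq_one_iff_eq (by positivity)]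

/-- For d > 0, ω ∈ ℝ, κ > 0: there exists a nontrivial pair (A,B) ∈ ℂ² such that
ψ(x) = A·e^{κx} + B·e^{−κx} satisfies ψ′(0) = ψ′(d) = ω·(ψ(d) − ψ(0)) if and only if
(2ω/κ)·(1 − e^{−κd})/(1 + e^{−κd}) = 1. -/
theorem stmt_2 (d ω κ : ℝ) (hd : 0 < d) (hκ : 0 < κ) :
    (∃ A B : ℂ, (A, B) ≠ (0, 0) ∧
      deriv (fun x : ℝ => A * Complex.exp ((κ : ℂ) * x) + B * Complex.exp (-((κ : ℂ) * x))) 0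
        = deriv (fun x : ℝ => A * Complex.exp ((κ : ℂ) * x) + B * Complex.exp (-((κ : ℂ) * x))) d ∧
      deriv (fun x : ℝ => A * Complex.exp ((κ : ℂ) * x) + B * Complex.exp (-((κ : ℂ) * x))) d
        = (ω : ℂ) * ((A * Complex.exp ((κ : ℂ) * d) + B * Complex.exp (-((κ : ℂ) * d)))
            - (A * Complex.exp ((κ : ℂ) * 0) + B * Complex.exp (-((κ : ℂ) * 0)))))
    ↔ (2 * ω / κ) * ((1 - Real.exp (-(κ * d))) / (1 + Real.exp (-(κ * d)))) = 1 := by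
  have he_lt_one : Real.exp (-(κ * d)) < 1 := Real.exp_lt_one_iff.2 (by nlinarith)
  have he_cast : exp (-((κ : ℂ) * d)) = (Real.exp (-(κ * d)) : ℂ) := by push_cast; rfl
  have hEe : exp ((κ : ℂ) * d) * exp (-((κ : ℂ) * d)) = 1 := by rw [← exp_add]; simp
  rw [two_mul_div_mul_div_eq_one_iff hκ (Real.exp_pos _), eq_comm]
  simp only [deriv_ofReal_exp_combination, ofReal_zero, mul_zero, neg_zero, exp_zero, mul_one]
  rw [he_cast] at hEe ⊢
  rw [exists_ne_zero_boundary_iff (by exact_mod_cast hκ.ne') hEe (by exact_mod_cast he_lt_one.ne)]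
  norm_cast
end

section
/- Let M(z) = (az+b)/(cz+d) with a,b,c,d ∈ ℂ and ad − bc ≠ 0 be a linear fractional transformation. Let Λ ⊂ ℂ be a compact set of two-dimensional Lebesgue measure zero such that neither the value M(∞) (when c ≠ 0, the point a/c) nor the pole M⁻¹(∞) (when c ≠ 0, the point −d/c) belongs to Λ. Let u : ℂ → ℂ, viewed as a map of two real variables, be differentiable at every point of ℂ ∖ Λ, and set v := u ∘ M (defined off the pole of M). Then ∫_{ℂ} (|∂₁v|² + |∂₂v|²) dx = ∫_{ℂ} (|∂₁u|² + |∂₂u|²) dx, as Lebesgue integrals of nonnegative measurable functions with values in [0,+∞] (the integrands being defined off the respective Lebesgue-null sets of non-differentiability). -/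
/-!
A linear fractional transformation `M` is holomorphic off its pole with derivative
`m = (ad - bc) / (cz + d)²`. Real-linearly, multiplication by `m` is a rotation scaled by `|m|`,
so the chain rule multiplies the Dirichlet integrand of `u` at `M z` by `|m|²`, which is also the
Jacobian determinant of `M`. The change of variables formula therefore identifies the two integrals
over the set of points that are not the pole and are not mapped into `Λ`, and its image under `M`.
Both sets have null complement: the first misses only the pole and the image of `Λ` under `M⁻¹`,
which is null because `M⁻¹` is differentiable on `Λ` (its pole `M(∞)` is not in `Λ`); the second
misses only `Λ` and `M(∞)`.
-/

open MeasureTheory Set ContinuousLinearMap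

noncomputable def frobeniusNormSq (A : ℂ →L[ℝ] ℂ) : ℝ := ‖A 1‖ ^ 2 + ‖A Complex.I‖ ^ 2

lemma det_restrictScalars_toSpanSingleton (m : ℂ) :
    ((toSpanSingleton ℂ m).restrictScalars ℝ : ℂ →L[ℝ] ℂ).det = Complex.normSq m := by
  simp [ContinuousLinearMap.det, LinearMap.det_restrictScalars, Algebra.norm_complex_eq]

lemma frobeniusNormSq_comp_toSpanSingleton (A : ℂ →L[ℝ] ℂ) (m : ℂ) :
    frobeniusNormSq (A.comp ((toSpanSingleton ℂ m).restrictScalars ℝ)) =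
      Complex.normSq m * frobeniusNormSq A := by
  have h1 : A m = m.re • A 1 + m.im • A Complex.I := by
    rw [← map_smul, ← map_smul, ← map_add]; simp [Complex.re_add_im]
  have hI : A (Complex.I • m) = (-m.im) • A 1 + m.re • A Complex.I := by
    rw [← map_smul, ← map_smul, ← map_add]; congr 1; apply Complex.ext <;> simp
  simp only [frobeniusNormSq, comp_apply, coe_restrictScalars', toSpanSingleton_apply, one_smul,
    h1, hI, Complex.sq_norm, Complex.normSq_apply]
  simp only [Complex.add_re, Complex.add_im, Complex.real_smul, Complex.mul_re, Complex.mul_im,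
    Complex.ofReal_re, Complex.ofReal_im]
  ring

theorem lintegral_frobeniusNormSq_fderiv_comp {f f' u : ℂ → ℂ} {s : Set ℂ}
    (hs : MeasurableSet s) (hf : ∀ x ∈ s, HasDerivAt f (f' x) x) (hf_inj : InjOn f s)
    (hs_ae : volume sᶜ = 0) (hfs_ae : volume (f '' s)ᶜ = 0)
    (hu : ∀ x ∈ s, DifferentiableAt ℝ u (f x)) :
    ∫⁻ x, ENNReal.ofReal (frobeniusNormSq (fderiv ℝ (u ∘ f) x)) =
      ∫⁻ y, ENNReal.ofReal (frobeniusNormSq (fderiv ℝ u y)) := by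
  set D : ℂ → ℂ →L[ℝ] ℂ := fun x => (toSpanSingleton ℂ (f' x)).restrictScalars ℝ
  have hD : ∀ x ∈ s, HasFDerivAt f (D x) x := fun x hx => by
    simpa [D, smulRight_one_eq_toSpanSingleton] using (hf x hx).hasFDerivAt.restrictScalars ℝ
  have hpt : ∀ x ∈ s, ENNReal.ofReal (frobeniusNormSq (fderiv ℝ (u ∘ f) x)) =
      ENNReal.ofReal |(D x).det| * ENNReal.ofReal (frobeniusNormSq (fderiv ℝ u (f x))) := by
    intro x hx
    rw [((hu x hx).hasFDerivAt.comp x (hD x hx)).fderiv, frobeniusNormSq_comp_toSpanSingleton,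
      det_restrictScalars_toSpanSingleton, abs_of_nonneg (Complex.normSq_nonneg _),
      ENNReal.ofReal_mul (Complex.normSq_nonneg _)]
  have hrestrict {t : Set ℂ} (ht : volume tᶜ = 0) : volume.restrict t = volume :=
    Measure.restrict_eq_self_of_ae_mem (by simpa using measure_eq_zero_iff_ae_notMem.1 ht)
  calc ∫⁻ x, ENNReal.ofReal (frobeniusNormSq (fderiv ℝ (u ∘ f) x))
      = ∫⁻ x in s, ENNReal.ofReal (frobeniusNormSq (fderiv ℝ (u ∘ f) x)) := by rw [hrestrict hs_ae]
    _ = ∫⁻ x in s, ENNReal.ofReal |(D x).det| *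
          ENNReal.ofReal (frobeniusNormSq (fderiv ℝ u (f x))) := setLIntegral_congr_fun hs hpt
    _ = ∫⁻ y in f '' s, ENNReal.ofReal (frobeniusNormSq (fderiv ℝ u y)) :=
      (lintegral_image_eq_lintegral_abs_det_fderiv_mul volume hs
        (fun x hx => (hD x hx).hasFDerivWithinAt) hf_inj
        fun y => ENNReal.ofReal (frobeniusNormSq (fderiv ℝ u y))).symm
    _ = ∫⁻ y, ENNReal.ofReal (frobeniusNormSq (fderiv ℝ u y)) := by rw [hrestrict hfs_ae]

noncomputable def lft (a b c d z : ℂ) : ℂ := (a * z + b) / (c * z + d)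

section
variable {a b c d z : ℂ}

lemma lft_hasDerivAt (hz : c * z + d ≠ 0) :
    HasDerivAt (lft a b c d) ((a * d - b * c) / (c * z + d) ^ 2) z := by
  have hnum : HasDerivAt (fun z => a * z + b) a z := by
    simpa using ((hasDerivAt_id z).const_mul a).add_const b
  have hden : HasDerivAt (fun z => c * z + d) c z := by
    simpa using ((hasDerivAt_id z).const_mul c).add_const d
  exact (hnum.div hden hz).congr_deriv (by ring)

lemma neg_mul_lft_add (hz : c * z + d ≠ 0) :
    -c * lft a b c d z + a = (a * d - b * c) / (c * z + d) := by
  rw [lft]; field_simp; ring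

lemma lft_inv_lft (hdet : a * d - b * c ≠ 0) (hz : c * z + d ≠ 0) :
    lft d (-b) (-c) a (lft a b c d z) = z := by
  have hden := neg_mul_lft_add (a := a) (b := b) hz
  rw [lft, hden, div_eq_iff (div_ne_zero hdet hz), lft, mul_div_assoc', mul_div_assoc',
    div_add' _ _ _ hz, div_left_inj' hz]
  ring

lemma lft_lft_inv (hdet : a * d - b * c ≠ 0) (hz : -c * z + a ≠ 0) :
    lft a b c d (lft d (-b) (-c) a z) = z := by
  simpa using lft_inv_lft (a := d) (b := -b) (c := -c) (d := a)
    (fun h => hdet (by linear_combination h)) hz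

lemma injOn_lft (hdet : a * d - b * c ≠ 0) : InjOn (lft a b c d) {z | c * z + d ≠ 0} :=
  LeftInvOn.injOn fun _ hz => lft_inv_lft hdet hz

lemma volume_setOf_mul_add_eq_zero (h : c ≠ 0 ∨ d ≠ 0) :
    volume {z : ℂ | c * z + d = 0} = 0 := by
  refine Set.Subsingleton.measure_zero (fun z hz w hw => ?_) volume
  simp only [mem_ofPred_eq] at hz hw
  rcases eq_or_ne c 0 with hc | hc
  · simp_all
  · exact mul_left_cancel₀ hc (by linear_combination hz - hw)

lemma volume_compl_setOf_lft_notMem {Λ : Set ℂ} (hdet : a * d - b * c ≠ 0) (hΛ : volume Λ = 0)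
    (hΛa : ∀ y ∈ Λ, -c * y + a ≠ 0) :
    volume {z | c * z + d ≠ 0 ∧ lft a b c d z ∉ Λ}ᶜ = 0 := by
  have hcd : c ≠ 0 ∨ d ≠ 0 := by
    by_contra! h
    exact hdet (by simp [h])
  have hN : volume (lft d (-b) (-c) a '' Λ) = 0 :=
    addHaar_image_eq_zero_of_differentiableOn_of_addHaar_eq_zero volume
      (fun y hy => ((lft_hasDerivAt (hΛa y hy)).hasFDerivAt.restrictScalars ℝ).differentiableAt
        |>.differentiableWithinAt) hΛ
  refine measure_mono_null (fun z hz => ?_)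
    (measure_union_null (volume_setOf_mul_add_eq_zero hcd) hN)
  by_cases hz0 : c * z + d = 0
  · exact Or.inl hz0
  · exact Or.inr ⟨lft a b c d z, by simpa [hz0] using hz, lft_inv_lft hdet hz0⟩

lemma volume_compl_image_lft {Λ : Set ℂ} (hdet : a * d - b * c ≠ 0) (hΛ : volume Λ = 0) :
    volume (lft a b c d '' {z | c * z + d ≠ 0 ∧ lft a b c d z ∉ Λ})ᶜ = 0 := by
  have hac : -c ≠ 0 ∨ a ≠ 0 := by
    by_contra! h
    exact hdet (by simp_all)
  refine measure_mono_null (fun y hy => ?_)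
    (measure_union_null hΛ (volume_setOf_mul_add_eq_zero hac))
  by_contra! hy'
  simp only [mem_union, mem_ofPred_eq, not_or] at hy'
  have hden : c * lft d (-b) (-c) a y + d ≠ 0 := by
    have := neg_mul_lft_add (a := d) (b := -b) hy'.2
    simp only [neg_neg] at this
    rw [this]
    exact div_ne_zero (fun h => hdet (by linear_combination h)) hy'.2
  exact hy ⟨_, ⟨hden, by rw [lft_lft_inv hdet hy'.2]; exact hy'.1⟩, lft_lft_inv hdet hy'.2⟩

end

/-- Conformal invariance of the Dirichlet integral under an LFT M(z) = (az+b)/(cz+d)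
(ad − bc ≠ 0): if Λ ⊂ ℂ is a compact Lebesgue-null set avoiding the value M(∞) and the
pole M⁻¹(∞) (which exist only when c ≠ 0), and u : ℂ → ℂ is (real-)differentiable off Λ,
then ∫_ℂ (|∂₁(u∘M)|² + |∂₂(u∘M)|²) = ∫_ℂ (|∂₁u|² + |∂₂u|²) as Lebesgue integrals with
values in [0,+∞]. -/
theorem stmt_6 (a b c d : ℂ) (hdet : a * d - b * c ≠ 0)
    (M : ℂ → ℂ) (hM : ∀ z, M z = (a * z + b) / (c * z + d))
    (Λ : Set ℂ) (hcomp : IsCompact Λ) (hnull : volume Λ = 0)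
    (havoid : c ≠ 0 → a / c ∉ Λ ∧ -d / c ∉ Λ)
    (u : ℂ → ℂ) (hu : ∀ z ∉ Λ, DifferentiableAt ℝ u z) :
    (∫⁻ x, ENNReal.ofReal
        (‖fderiv ℝ (fun z => u (M z)) x 1‖ ^ 2
          + ‖fderiv ℝ (fun z => u (M z)) x Complex.I‖ ^ 2))
      = ∫⁻ x, ENNReal.ofReal
          (‖fderiv ℝ u x 1‖ ^ 2 + ‖fderiv ℝ u x Complex.I‖ ^ 2) := by
  obtain rfl : M = lft a b c d := funext hM
  have hΛa : ∀ y ∈ Λ, -c * y + a ≠ 0 := by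
    intro y hy h
    rcases eq_or_ne c 0 with hc | hc
    · exact hdet (by simp_all)
    · exact (havoid hc).1 (by rwa [show y = a / c by field_simp; linear_combination -h] at hy)
  have hs : MeasurableSet {z | c * z + d ≠ 0 ∧ lft a b c d z ∉ Λ} :=
    ((measurableSet_singleton 0).compl.preimage (by fun_prop)).inter
      (hcomp.measurableSet.compl.preimage (by unfold lft; fun_prop))
  exact lintegral_frobeniusNormSq_fderiv_comp hs (fun z hz => lft_hasDerivAt hz.1)
    ((injOn_lft hdet).mono fun z hz => hz.1) (volume_compl_setOf_lft_notMem hdet hnull hΛa)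
    (volume_compl_image_lft hdet hnull) (fun z hz => hu _ hz.2)
end

section
/- Let L > 0 and let Λ := {(x,0) ∈ ℝ² : 0 < x < L} be a straight segment of length L, contained in the x-axis Σ, with Ω₊ and Ω₋ the open upper and lower half-planes. Then for every constant ω ∈ ℝ with ω ≤ 1/(2πL) and every pair of smooth compactly supported functions f, g : ℝ² → ℂ satisfying f(x,0) = g(x,0) for all x ∉ (0,L), one has ∫_{Ω₊} |∇f|² dx + ∫_{Ω₋} |∇g|² dx ≥ ω·∫₀^L |f(x,0) − g(x,0)|² dx. (Quadratic-form formulation: the δ′-interaction of constant strength ω ≤ 1/(2πL) supported on a segment of length L produces a nonnegative form, hence no bound states.) -/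
open MeasureTheory

/-- The squared Dirichlet integrand |∇u|² = |∂₁u|² + |∂₂u|² of a function u : ℝ² → ℂ. -/
noncomputable def gradSq (u : ℝ × ℝ → ℂ) (x : ℝ × ℝ) : ℝ :=
  ‖fderiv ℝ u x (1, 0)‖ ^ 2 + ‖fderiv ℝ u x (0, 1)‖ ^ 2

lemma gradSq_nonneg (u : ℝ × ℝ → ℂ) (x : ℝ × ℝ) : 0 ≤ gradSq u x := by
  unfold gradSq; positivity

lemma gradSq_continuous {u : ℝ × ℝ → ℂ} (hu : ContDiff ℝ (⊤ : ℕ∞) u) : Continuous (gradSq u) := by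
  have h := hu.continuous_fderiv (by simp)
  exact ((h.clm_apply continuous_const).norm.pow 2).add
    ((h.clm_apply continuous_const).norm.pow 2)

lemma gradSq_integrable {u : ℝ × ℝ → ℂ} (hu : ContDiff ℝ (⊤ : ℕ∞) u)
    (hus : HasCompactSupport u) : Integrable (gradSq u) := by
  refine (gradSq_continuous hu).integrable_of_hasCompactSupport ?_
  have h : HasCompactSupport (fderiv ℝ u) := hus.fderiv ℝ
  have : gradSq u = (fun D : ℝ × ℝ →L[ℝ] ℂ => ‖D (1,0)‖ ^ 2 + ‖D (0,1)‖ ^ 2) ∘ fderiv ℝ u := rfl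
  rw [this]
  exact h.comp_left (by simp)

/-- Cauchy–Schwarz for interval integrals of a nonnegative continuous function. -/
lemma sq_intervalIntegral_le {b : ℝ} (hb : 0 ≤ b) {ψ : ℝ → ℝ} (hψ : Continuous ψ)
    (hψ0 : ∀ t, 0 ≤ ψ t) :
    (∫ t in (0:ℝ)..b, ψ t) ^ 2 ≤ b * ∫ t in (0:ℝ)..b, ψ t ^ 2 := by
  set μ := volume.restrict (Set.Ioc (0:ℝ) b) with hμ
  haveI : IsFiniteMeasure μ := by
    constructor
    rw [hμ, Measure.restrict_apply_univ, Real.volume_Ioc]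
    exact ENNReal.ofReal_lt_top
  obtain ⟨C, hC⟩ := (isCompact_Icc (a := (0:ℝ)) (b := b)).exists_bound_of_continuousOn
    hψ.continuousOn
  have hae : ∀ᵐ t ∂μ, ‖ψ t‖ ≤ C := by
    filter_upwards [ae_restrict_mem measurableSet_Ioc] with t ht
    exact hC t (Set.Ioc_subset_Icc_self ht)
  have hm2 : MemLp ψ (ENNReal.ofReal 2) μ := MemLp.of_bound hψ.aestronglyMeasurable C hae
  have hm1 : MemLp (fun _ : ℝ => (1:ℝ)) (ENNReal.ofReal 2) μ :=
    MemLp.of_bound aestronglyMeasurable_const 1 (by filter_upwards with t; simp)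
  have hconj : Real.HolderConjugate 2 2 := Real.HolderConjugate.two_two
  have h := integral_mul_le_Lp_mul_Lq_of_nonneg (μ := μ) hconj
    (Filter.Eventually.of_forall hψ0) (Filter.Eventually.of_forall fun _ => zero_le_one)
    hm2 hm1
  simp only [mul_one, Real.one_rpow] at h
  have hr2 : ∀ x : ℝ, 0 ≤ x → x ^ (2:ℝ) = x ^ 2 := by
    intro x hx
    rw [show (2:ℝ) = ((2:ℕ):ℝ) by norm_num, Real.rpow_natCast]
  have hint2 : (∫ a, ψ a ^ (2:ℝ) ∂μ) = ∫ a, ψ a ^ 2 ∂μ :=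
    integral_congr_ae (Filter.Eventually.of_forall fun a => hr2 _ (hψ0 a))
  have hone : (∫ _ : ℝ, (1:ℝ) ∂μ) = b := by
    rw [integral_const, smul_eq_mul, mul_one, hμ, measureReal_def, Measure.restrict_apply_univ, Real.volume_Ioc,
      ENNReal.toReal_ofReal (by linarith), sub_zero]
  rw [hint2, hone] at h
  set S := ∫ a, ψ a ∂μ with hS
  set Q := ∫ a, ψ a ^ 2 ∂μ with hQ
  have hS0 : 0 ≤ S := integral_nonneg hψ0
  have hQ0 : 0 ≤ Q := integral_nonneg fun a => sq_nonneg _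
  have hsq : (Q ^ ((1:ℝ)/2) * b ^ ((1:ℝ)/2)) ^ 2 = Q * b := by
    rw [mul_pow, ← Real.rpow_natCast (Q ^ ((1:ℝ)/2)) 2, ← Real.rpow_natCast (b ^ ((1:ℝ)/2)) 2,
      ← Real.rpow_mul hQ0, ← Real.rpow_mul hb]
    norm_num
  have h2 : S ^ 2 ≤ Q * b := by
    calc S ^ 2 ≤ (Q ^ ((1:ℝ)/2) * b ^ ((1:ℝ)/2)) ^ 2 := by
          apply pow_le_pow_left₀ hS0 h
    _ = Q * b := hsq
  have e1 : (∫ t in (0:ℝ)..b, ψ t) = S := by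
    rw [intervalIntegral.integral_of_le hb]
  have e2 : (∫ t in (0:ℝ)..b, ψ t ^ 2) = Q := by
    rw [intervalIntegral.integral_of_le hb]
  rw [e1, e2]
  linarith

set_option maxHeartbeats 2000000 in
/-- The key trace inequality. -/
lemma trace_ineq (L : ℝ) (hL : 0 < L) (u : ℝ × ℝ → ℂ) (hu : ContDiff ℝ (⊤ : ℕ∞) u)
    (hus : HasCompactSupport u) (h0 : ∀ x : ℝ, x ≤ 0 → u (x, 0) = 0) :
    (∫ x in (0:ℝ)..L, ‖u (x, 0)‖ ^ 2)
      ≤ Real.pi * L * ∫ p in {p : ℝ × ℝ | 0 < p.2}, gradSq u p := by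
  have hπ := Real.pi_pos
  set G := gradSq u with hG
  have hGc : Continuous G := gradSq_continuous hu
  have hGi : Integrable G := gradSq_integrable hu hus
  have hG0 : ∀ p, 0 ≤ G p := gradSq_nonneg u
  -- the angular average
  set A : ℝ → ℝ := fun r => ∫ θ in (0:ℝ)..Real.pi, G (r * Real.cos θ, r * Real.sin θ) with hA
  have hAc : Continuous A := by
    have hcu : Continuous (Function.uncurry
        fun (r θ : ℝ) => G (r * Real.cos θ, r * Real.sin θ)) := by
      apply hGc.comp; fun_prop
    exact intervalIntegral.continuous_parametric_intervalIntegral_of_continuous hcu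
      continuous_const
  have hA0 : ∀ r, 0 ≤ A r :=
    fun r => intervalIntegral.integral_nonneg Real.pi_pos.le fun θ _ => hG0 _
  -- Step 1: pointwise bound on the segment
  have step1 : ∀ x ∈ Set.Icc (0:ℝ) L, ‖u (x, 0)‖ ^ 2 ≤ Real.pi * L * (x * A x) := by
    intro x hx
    obtain ⟨hx0, hxL⟩ := hx
    set φ' : ℝ → ℂ := fun θ => fderiv ℝ u (x * Real.cos θ, x * Real.sin θ)
        (-(x * Real.sin θ), x * Real.cos θ) with hφ'
    have hder : ∀ θ : ℝ, HasDerivAt (fun θ : ℝ => u (x * Real.cos θ, x * Real.sin θ))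
        (φ' θ) θ := by
      intro θ
      have h1 : HasDerivAt (fun θ : ℝ => x * Real.cos θ) (-(x * Real.sin θ)) θ := by
        simpa [mul_comm, mul_neg] using (Real.hasDerivAt_cos θ).const_mul x
      have h2 : HasDerivAt (fun θ : ℝ => x * Real.sin θ) (x * Real.cos θ) θ :=
        (Real.hasDerivAt_sin θ).const_mul x
      exact (((hu.differentiable (by simp)) _).hasFDerivAt).comp_hasDerivAt θ (h1.prodMk h2)
    have hφ'c : Continuous φ' := by
      apply Continuous.clm_apply
      · exact (hu.continuous_fderiv (by simp)).comp (by fun_prop)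
      · fun_prop
    have hkey : u (x, 0) = -(∫ θ in (0:ℝ)..Real.pi, φ' θ) := by
      have hFTC := intervalIntegral.integral_eq_sub_of_hasDerivAt
        (f := fun θ : ℝ => u (x * Real.cos θ, x * Real.sin θ)) (f' := φ')
        (fun θ _ => hder θ) (hφ'c.intervalIntegrable 0 Real.pi)
      have hz : u (x * Real.cos Real.pi, x * Real.sin Real.pi) = 0 := by
        rw [Real.cos_pi, Real.sin_pi, mul_neg_one, mul_zero]
        exact h0 (-x) (by linarith)
      rw [hFTC]
      rw [hz, Real.cos_zero, Real.sin_zero, mul_one, mul_zero, zero_sub, neg_neg]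
    have hnorm : ‖u (x, 0)‖ ≤ ∫ θ in (0:ℝ)..Real.pi, ‖φ' θ‖ := by
      rw [hkey, norm_neg]
      exact intervalIntegral.norm_integral_le_integral_norm Real.pi_pos.le
    have hCS := sq_intervalIntegral_le Real.pi_pos.le (ψ := fun θ => ‖φ' θ‖) hφ'c.norm
      (fun θ => norm_nonneg _)
    have hptθ : ∀ θ ∈ Set.Icc (0:ℝ) Real.pi,
        ‖φ' θ‖ ^ 2 ≤ x ^ 2 * G (x * Real.cos θ, x * Real.sin θ) := by
      intro θ _
      set D := fderiv ℝ u (x * Real.cos θ, x * Real.sin θ) with hD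
      have hv : ((-(x * Real.sin θ), x * Real.cos θ) : ℝ × ℝ)
          = (-(x * Real.sin θ)) • ((1:ℝ), (0:ℝ)) + (x * Real.cos θ) • ((0:ℝ), (1:ℝ)) := by
        simp [Prod.ext_iff]
      have happ : φ' θ = (-(x * Real.sin θ)) • D ((1:ℝ),(0:ℝ))
          + (x * Real.cos θ) • D ((0:ℝ),(1:ℝ)) := by
        rw [hφ']
        show D (-(x * Real.sin θ), x * Real.cos θ) = _
        rw [hv, map_add, D.map_smul, D.map_smul]
      have hn : ‖φ' θ‖ ≤ |x * Real.sin θ| * ‖D ((1:ℝ),(0:ℝ))‖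
          + |x * Real.cos θ| * ‖D ((0:ℝ),(1:ℝ))‖ := by
        rw [happ]
        refine (norm_add_le _ _).trans ?_
        rw [norm_smul, norm_smul]
        simp [Real.norm_eq_abs, abs_neg, abs_mul]
      have hGval : G (x * Real.cos θ, x * Real.sin θ)
          = ‖D ((1:ℝ),(0:ℝ))‖^2 + ‖D ((0:ℝ),(1:ℝ))‖^2 := rfl
      rw [hGval]
      have h1 : (x * Real.sin θ)^2 + (x * Real.cos θ)^2 = x^2 := by
        have := Real.sin_sq_add_cos_sq θ; nlinarith
      nlinarith [abs_nonneg (x * Real.sin θ), abs_nonneg (x * Real.cos θ),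
        norm_nonneg (D ((1:ℝ),(0:ℝ))), norm_nonneg (D ((0:ℝ),(1:ℝ))),
        sq_abs (x * Real.sin θ), sq_abs (x * Real.cos θ),
        sq_nonneg (|x * Real.sin θ| * ‖D ((0:ℝ),(1:ℝ))‖
          - |x * Real.cos θ| * ‖D ((1:ℝ),(0:ℝ))‖),
        norm_nonneg (φ' θ), hn]
    have hmono : (∫ θ in (0:ℝ)..Real.pi, ‖φ' θ‖^2)
        ≤ ∫ θ in (0:ℝ)..Real.pi, x^2 * G (x * Real.cos θ, x * Real.sin θ) := by
      apply intervalIntegral.integral_mono_on Real.pi_pos.le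
        ((hφ'c.norm.pow 2).intervalIntegrable _ _)
        ((continuous_const.mul (hGc.comp (by fun_prop : Continuous fun θ : ℝ =>
          ((x * Real.cos θ, x * Real.sin θ) : ℝ × ℝ)))).intervalIntegrable _ _) hptθ
    have hAx : (∫ θ in (0:ℝ)..Real.pi, x^2 * G (x * Real.cos θ, x * Real.sin θ))
        = x^2 * A x := intervalIntegral.integral_const_mul _ _
    calc ‖u (x,0)‖^2 ≤ (∫ θ in (0:ℝ)..Real.pi, ‖φ' θ‖)^2 :=
          pow_le_pow_left₀ (norm_nonneg _) hnorm 2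
    _ ≤ Real.pi * ∫ θ in (0:ℝ)..Real.pi, ‖φ' θ‖^2 := hCS
    _ ≤ Real.pi * (x^2 * A x) := by
          rw [← hAx]; exact mul_le_mul_of_nonneg_left hmono Real.pi_pos.le
    _ ≤ Real.pi * L * (x * A x) := by
          nlinarith [hA0 x, mul_nonneg (mul_nonneg (sub_nonneg.2 hxL) hx0) (hA0 x)]
  -- Step 2: integrate the pointwise bound
  have hucont : Continuous fun x : ℝ => ‖u (x,0)‖^2 := by
    have := hu.continuous
    fun_prop
  have step2 : (∫ x in (0:ℝ)..L, ‖u (x,0)‖^2)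
      ≤ Real.pi * L * ∫ x in (0:ℝ)..L, x * A x := by
    calc (∫ x in (0:ℝ)..L, ‖u (x,0)‖^2)
        ≤ ∫ x in (0:ℝ)..L, Real.pi * L * (x * A x) :=
          intervalIntegral.integral_mono_on hL.le (hucont.intervalIntegrable _ _)
            ((continuous_const.mul (continuous_id.mul hAc)).intervalIntegrable _ _) step1
    _ = Real.pi * L * ∫ x in (0:ℝ)..L, x * A x := intervalIntegral.integral_const_mul _ _
  -- Step 3: polar coordinates
  have hsymmc : Continuous (polarCoord.symm : ℝ × ℝ → ℝ × ℝ) := by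
    have : (polarCoord.symm : ℝ × ℝ → ℝ × ℝ)
        = fun p => (p.1 * Real.cos p.2, p.1 * Real.sin p.2) := funext polarCoord_symm_apply
    rw [this]; fun_prop
  have step3 : (∫ x in (0:ℝ)..L, x * A x) ≤ ∫ p in {p : ℝ × ℝ | 0 < p.2}, G p := by
    set S : Set (ℝ × ℝ) := {p | 0 < p.2 ∧ p.1^2 + p.2^2 < L^2} with hSdef
    have hSopen : IsOpen S := by
      have h1 : IsOpen {p : ℝ × ℝ | 0 < p.2} := isOpen_lt continuous_const continuous_snd
      have h2 : IsOpen {p : ℝ × ℝ | p.1^2 + p.2^2 < L^2} :=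
        isOpen_lt (by fun_prop) continuous_const
      exact h1.inter h2
    set W : ℝ × ℝ → ℝ := S.indicator G with hW
    have hpolar := integral_comp_polarCoord_symm W
    have hRHS : (∫ p, W p) = ∫ p in S, G p := integral_indicator hSopen.measurableSet
    have hRle : (∫ p in S, G p) ≤ ∫ p in {p : ℝ × ℝ | 0 < p.2}, G p :=
      setIntegral_mono_set hGi.integrableOn
        (Filter.Eventually.of_forall fun p => hG0 p)
        (HasSubset.Subset.eventuallyLE fun p hp => hp.1)
    have hprodsub : Set.Ioo (0:ℝ) L ×ˢ Set.Ioo (0:ℝ) Real.pi ⊆ polarCoord.target := by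
      rintro ⟨r, θ⟩ ⟨hr, hθ⟩
      exact ⟨hr.1, by constructor <;> [linarith [hθ.1]; exact hθ.2]⟩
    have hptwise : ∀ p ∈ polarCoord.target, p.1 • W (polarCoord.symm p)
        = (Set.Ioo (0:ℝ) L ×ˢ Set.Ioo (0:ℝ) Real.pi).indicator
            (fun q : ℝ × ℝ => q.1 • G (polarCoord.symm q)) p := by
      rintro ⟨r, θ⟩ ⟨hr, hθ⟩
      simp only [Set.mem_Ioi] at hr
      simp only [Set.mem_Ioo] at hθ
      by_cases hmem : (r, θ) ∈ Set.Ioo (0:ℝ) L ×ˢ Set.Ioo (0:ℝ) Real.pi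
      · rw [Set.indicator_of_mem hmem]
        obtain ⟨hrm, hθm⟩ := hmem
        have hin : polarCoord.symm (r, θ) ∈ S := by
          rw [polarCoord_symm_apply, hSdef]
          simp only [Set.mem_setOf_eq]
          constructor
          · exact mul_pos hr (Real.sin_pos_of_pos_of_lt_pi hθm.1 hθm.2)
          · have : (r * Real.cos θ)^2 + (r * Real.sin θ)^2 = r^2 := by
              have := Real.sin_sq_add_cos_sq θ; nlinarith
            rw [this]
            have : |r| < |L| := by rw [abs_of_pos hr, abs_of_pos hL]; exact hrm.2
            exact sq_lt_sq' (by linarith [abs_of_pos hr ▸ this]) hrm.2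
        rw [hW, Set.indicator_of_mem hin]
      · rw [Set.indicator_of_notMem hmem]
        have hout : polarCoord.symm (r, θ) ∉ S := by
          rw [polarCoord_symm_apply, hSdef]
          simp only [Set.mem_setOf_eq]
          rw [Set.mem_prod, not_and_or] at hmem
          rcases hmem with h | h
          · -- r ≥ L
            have hrL : L ≤ r := by
              simp only [Set.mem_Ioo, not_and_or, not_lt] at h
              rcases h with h | h
              · linarith
              · exact h
            rintro ⟨-, hlt⟩
            have : (r * Real.cos θ)^2 + (r * Real.sin θ)^2 = r^2 := by
              have := Real.sin_sq_add_cos_sq θ; nlinarith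
            rw [this] at hlt
            nlinarith
          · -- θ ≤ 0
            have hθ0 : θ ≤ 0 := by
              simp only [Set.mem_Ioo, not_and_or, not_lt] at h
              rcases h with h | h
              · exact h
              · linarith [hθ.2]
            rintro ⟨hpos, -⟩
            have : Real.sin θ ≤ 0 :=
              Real.sin_nonpos_of_nonpos_of_neg_pi_le hθ0 hθ.1.le
            nlinarith
        rw [hW, Set.indicator_of_notMem hout, smul_zero]
    have hLHS : (∫ p in polarCoord.target, p.1 • W (polarCoord.symm p))
        = ∫ p in Set.Ioo (0:ℝ) L ×ˢ Set.Ioo (0:ℝ) Real.pi,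
            p.1 • G (polarCoord.symm p) := by
      rw [setIntegral_congr_fun polarCoord.open_target.measurableSet hptwise,
        setIntegral_indicator ((measurableSet_Ioo).prod (measurableSet_Ioo)),
        Set.inter_eq_right.mpr hprodsub]
    have hIprod : IntegrableOn (fun p : ℝ × ℝ => p.1 • G (polarCoord.symm p))
        (Set.Ioo (0:ℝ) L ×ˢ Set.Ioo (0:ℝ) Real.pi) := by
      have hcont : Continuous fun p : ℝ × ℝ => p.1 • G (polarCoord.symm p) :=
        continuous_fst.smul (hGc.comp hsymmc)
      exact (hcont.continuousOn.integrableOn_compact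
        (isCompact_Icc.prod isCompact_Icc)).mono_set
        (Set.prod_mono Set.Ioo_subset_Icc_self Set.Ioo_subset_Icc_self)
    have hfub : (∫ p in Set.Ioo (0:ℝ) L ×ˢ Set.Ioo (0:ℝ) Real.pi,
          p.1 • G (polarCoord.symm p))
        = ∫ x in Set.Ioo (0:ℝ) L, ∫ y in Set.Ioo (0:ℝ) Real.pi,
            x • G (polarCoord.symm (x, y)) := by
      rw [Measure.volume_eq_prod] at hIprod ⊢
      exact setIntegral_prod _ hIprod
    have hinner : ∀ x : ℝ, (∫ y in Set.Ioo (0:ℝ) Real.pi,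
        x • G (polarCoord.symm (x, y))) = x * A x := by
      intro x
      have hAeq : A x = ∫ y in Set.Ioo (0:ℝ) Real.pi,
          G (x * Real.cos y, x * Real.sin y) := by
        rw [hA]
        simp only []
        rw [intervalIntegral.integral_of_le Real.pi_pos.le, integral_Ioc_eq_integral_Ioo]
      rw [hAeq, ← integral_const_mul]
      refine setIntegral_congr_fun measurableSet_Ioo fun y _ => ?_
      rw [polarCoord_symm_apply, smul_eq_mul]
    have houter : (∫ x in Set.Ioo (0:ℝ) L, x * A x) = ∫ x in (0:ℝ)..L, x * A x := by
      rw [intervalIntegral.integral_of_le hL.le, integral_Ioc_eq_integral_Ioo]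
    calc (∫ x in (0:ℝ)..L, x * A x)
        = ∫ p in polarCoord.target, p.1 • W (polarCoord.symm p) := by
          rw [hLHS, hfub, ← houter]
          exact (setIntegral_congr_fun measurableSet_Ioo fun x _ => hinner x).symm
    _ = ∫ p, W p := hpolar
    _ = ∫ p in S, G p := hRHS
    _ ≤ ∫ p in {p : ℝ × ℝ | 0 < p.2}, G p := hRle
  calc (∫ x in (0:ℝ)..L, ‖u (x,0)‖^2)
      ≤ Real.pi * L * ∫ x in (0:ℝ)..L, x * A x := step2
  _ ≤ Real.pi * L * ∫ p in {p : ℝ × ℝ | 0 < p.2}, G p :=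
      mul_le_mul_of_nonneg_left step3 (by positivity)

set_option maxHeartbeats 1000000 in
/-- The δ′-interaction of constant strength ω ≤ 1/(2πL) supported on the segment
Λ = {(x,0) : 0 < x < L} produces a nonnegative quadratic form: for all smooth compactly
supported f, g agreeing on the x-axis outside (0,L),
∫_{Ω₊}|∇f|² + ∫_{Ω₋}|∇g|² ≥ ω·∫₀^L |f(x,0) − g(x,0)|² dx. -/
theorem stmt_12 (L : ℝ) (hL : 0 < L) (ω : ℝ) (hω : ω ≤ 1 / (2 * Real.pi * L))
    (f g : ℝ × ℝ → ℂ) (hf : ContDiff ℝ (⊤ : ℕ∞) f) (hg : ContDiff ℝ (⊤ : ℕ∞) g)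
    (hfs : HasCompactSupport f) (hgs : HasCompactSupport g)
    (hjump : ∀ x : ℝ, x ∉ Set.Ioo 0 L → f (x, 0) = g (x, 0)) :
    ω * ∫ x in (0 : ℝ)..L, ‖f (x, 0) - g (x, 0)‖ ^ 2
      ≤ (∫ x in {p : ℝ × ℝ | 0 < p.2}, gradSq f x)
        + (∫ x in {p : ℝ × ℝ | p.2 < 0}, gradSq g x) := by
  have hπ := Real.pi_pos
  -- the reflection map
  set T : ℝ × ℝ → ℝ × ℝ := fun p => (p.1, -p.2) with hT
  have hTcont : Continuous T := by fun_prop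
  let hThomeo : (ℝ × ℝ) ≃ₜ (ℝ × ℝ) := (Homeomorph.refl ℝ).prodCongr (Homeomorph.neg ℝ)
  have hTeq : (hThomeo : ℝ × ℝ → ℝ × ℝ) = T := rfl
  set gt : ℝ × ℝ → ℂ := fun p => g (T p) with hgt
  have hgtc : ContDiff ℝ (⊤ : ℕ∞) gt := hg.comp (contDiff_fst.prodMk contDiff_snd.neg)
  have hgts : HasCompactSupport gt := by
    have := hgs.comp_isClosedEmbedding (g := T)
      (by rw [← hTeq]; exact hThomeo.isClosedEmbedding)
    exact this
  -- gradSq of the reflected function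
  have hgrad_gt : ∀ p, gradSq gt p = gradSq g (T p) := by
    intro p
    set Tl : ℝ × ℝ →L[ℝ] ℝ × ℝ :=
      (ContinuousLinearMap.fst ℝ ℝ ℝ).prod (-(ContinuousLinearMap.snd ℝ ℝ ℝ)) with hTl
    have hTlapp : ∀ q : ℝ × ℝ, Tl q = T q := fun q => rfl
    have hcomp : gt = g ∘ Tl := by funext q; simp only [Function.comp_apply, hTlapp]; rfl
    have hd : fderiv ℝ gt p = (fderiv ℝ g (Tl p)).comp Tl := by
      rw [hcomp, fderiv_comp p ((hg.differentiable (by simp)) _) Tl.differentiableAt, Tl.fderiv]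
    have e1 : Tl ((1:ℝ), (0:ℝ)) = ((1:ℝ), (0:ℝ)) := by
      simp [hTl, ContinuousLinearMap.prod_apply]
    have e2 : Tl ((0:ℝ), (1:ℝ)) = -((0:ℝ), (1:ℝ)) := by
      simp [hTl, ContinuousLinearMap.prod_apply, Prod.ext_iff]
    have hTp : Tl p = T p := hTlapp p
    rw [gradSq, gradSq, hd]
    simp only [ContinuousLinearMap.coe_comp', Function.comp_apply, e1, e2, map_neg, norm_neg,
      hTp]
  -- energy of reflected function equals lower energy
  have hTmp : MeasurePreserving T := by
    have : MeasurePreserving (Prod.map (id : ℝ → ℝ) (Neg.neg : ℝ → ℝ))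
        (volume.prod volume) (volume.prod volume) :=
      (MeasurePreserving.id volume).prod (Measure.measurePreserving_neg volume)
    exact this
  have hTemb : MeasurableEmbedding T := by
    rw [← hTeq]; exact hThomeo.measurableEmbedding
  have hEgt : (∫ p in {p : ℝ × ℝ | 0 < p.2}, gradSq gt p)
      = ∫ p in {p : ℝ × ℝ | p.2 < 0}, gradSq g p := by
    have hpre : T ⁻¹' {p : ℝ × ℝ | p.2 < 0} = {p : ℝ × ℝ | 0 < p.2} := by
      ext p; simp [hT, neg_lt_zero]
    rw [show (∫ p in {p : ℝ × ℝ | 0 < p.2}, gradSq gt p)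
        = ∫ p in T ⁻¹' {p : ℝ × ℝ | p.2 < 0}, gradSq g (T p) by
      rw [hpre]; exact setIntegral_congr_fun (by
        exact measurableSet_lt measurable_const measurable_snd) fun p _ => hgrad_gt p]
    exact hTmp.setIntegral_preimage_emb hTemb _ _
  -- the jump function
  set u : ℝ × ℝ → ℂ := fun p => f p - gt p with hu'
  have hu : ContDiff ℝ (⊤ : ℕ∞) u := hf.sub hgtc
  have hus : HasCompactSupport u := by
    have huw : u = f + -gt := by funext p; simp [hu', sub_eq_add_neg]
    rw [huw]; exact hfs.add hgts.neg
  have hub : ∀ x : ℝ, u (x, 0) = f (x, 0) - g (x, 0) := by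
    intro x; simp only [hu', hgt, hT, neg_zero]
  have h0 : ∀ x : ℝ, x ≤ 0 → u (x, 0) = 0 := by
    intro x hx
    rw [hub, hjump x (by simp [Set.mem_Ioo]; intro h; linarith), sub_self]
  -- pointwise energy bound
  have hptw : ∀ p, gradSq u p ≤ 2 * gradSq f p + 2 * gradSq gt p := by
    intro p
    have hdf : DifferentiableAt ℝ f p := (hf.differentiable (by simp)) p
    have hdg : DifferentiableAt ℝ gt p := (hgtc.differentiable (by simp)) p
    have hd : fderiv ℝ u p = fderiv ℝ f p - fderiv ℝ gt p := fderiv_sub hdf hdg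
    rw [gradSq, gradSq, gradSq, hd]
    simp only [ContinuousLinearMap.sub_apply]
    have n1 := norm_sub_le (fderiv ℝ f p (1,0)) (fderiv ℝ gt p (1,0))
    have n2 := norm_sub_le (fderiv ℝ f p (0,1)) (fderiv ℝ gt p (0,1))
    have m1 : (0:ℝ) ≤ ‖fderiv ℝ f p (1,0) - fderiv ℝ gt p (1,0)‖ := norm_nonneg _
    have m2 : (0:ℝ) ≤ ‖fderiv ℝ f p (0,1) - fderiv ℝ gt p (0,1)‖ := norm_nonneg _
    nlinarith [sq_nonneg (‖fderiv ℝ f p (1,0)‖ - ‖fderiv ℝ gt p (1,0)‖),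
      sq_nonneg (‖fderiv ℝ f p (0,1)‖ - ‖fderiv ℝ gt p (0,1)‖),
      norm_nonneg (fderiv ℝ f p (1,0)), norm_nonneg (fderiv ℝ gt p (1,0)),
      norm_nonneg (fderiv ℝ f p (0,1)), norm_nonneg (fderiv ℝ gt p (0,1))]
  have hIf : IntegrableOn (gradSq f) {p : ℝ × ℝ | 0 < p.2} :=
    (gradSq_integrable hf hfs).integrableOn
  have hIgt : IntegrableOn (gradSq gt) {p : ℝ × ℝ | 0 < p.2} :=
    (gradSq_integrable hgtc hgts).integrableOn
  have hIu : IntegrableOn (gradSq u) {p : ℝ × ℝ | 0 < p.2} :=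
    (gradSq_integrable hu hus).integrableOn
  have hEu : (∫ p in {p : ℝ × ℝ | 0 < p.2}, gradSq u p)
      ≤ 2 * (∫ p in {p : ℝ × ℝ | 0 < p.2}, gradSq f p)
        + 2 * (∫ p in {p : ℝ × ℝ | 0 < p.2}, gradSq gt p) := by
    rw [← integral_const_mul, ← integral_const_mul, ← integral_add (hIf.const_mul 2) (hIgt.const_mul 2)]
    exact setIntegral_mono_on hIu ((hIf.const_mul 2).add (hIgt.const_mul 2))
      (by exact measurableSet_lt measurable_const measurable_snd) fun p _ => hptw p
  -- trace inequality
  have htrace := trace_ineq L hL u hu hus h0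
  have hInt : (∫ x in (0:ℝ)..L, ‖f (x, 0) - g (x, 0)‖ ^ 2)
      = ∫ x in (0:ℝ)..L, ‖u (x, 0)‖ ^ 2 := by
    refine intervalIntegral.integral_congr fun x _ => ?_
    rw [hub]
  have hIpos : 0 ≤ ∫ x in (0:ℝ)..L, ‖f (x, 0) - g (x, 0)‖ ^ 2 :=
    intervalIntegral.integral_nonneg hL.le fun x _ => by positivity
  -- final arithmetic
  set I := ∫ x in (0:ℝ)..L, ‖f (x, 0) - g (x, 0)‖ ^ 2
  set Ef := ∫ p in {p : ℝ × ℝ | 0 < p.2}, gradSq f p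
  set Eg := ∫ p in {p : ℝ × ℝ | p.2 < 0}, gradSq g p
  have h1 : ω * I ≤ (1 / (2 * Real.pi * L)) * I :=
    mul_le_mul_of_nonneg_right hω hIpos
  have h2 : I ≤ Real.pi * L * (2 * Ef + 2 * Eg) := by
    calc I = ∫ x in (0:ℝ)..L, ‖u (x, 0)‖ ^ 2 := hInt
    _ ≤ Real.pi * L * ∫ p in {p : ℝ × ℝ | 0 < p.2}, gradSq u p := htrace
    _ ≤ Real.pi * L * (2 * Ef + 2 * Eg) := by
        refine mul_le_mul_of_nonneg_left ?_ (by positivity)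
        rw [← hEgt]; exact hEu
  have h3 : (1 / (2 * Real.pi * L)) * I ≤ Ef + Eg := by
    have := mul_le_mul_of_nonneg_left h2 (le_of_lt (by positivity :
      (0:ℝ) < 1 / (2 * Real.pi * L)))
    calc (1 / (2 * Real.pi * L)) * I
        ≤ (1 / (2 * Real.pi * L)) * (Real.pi * L * (2 * Ef + 2 * Eg)) := this
    _ = Ef + Eg := by field_simp
  linarith
end
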